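/- arXiv:2009.04146 — 7 statements merged into one kernel-verified Lean document; each statement's English description precedes it below -/
import Mathlib

section
/- The second order twisted B-spline satisfies, for (x,y) ∈ (0,1] × (0,1], φ₂(x,y) = (2/(π² x y)) (1 - cos(π x y)). -/
/-!
For `(x, y) ∈ (0,1]²` the two unit-square indicators in `φ₁ × φ₁` overlap, up to a null set,
in the rectangle `(0,x] × (0,y]`, and the twist `e^{πi(uy - vx)}` splits as
`e^{πiyu} · e^{-πixv}`. The integral therefore factorises into two one-dimensional exponential
integrals, whose product `(e^{iθ} - 1)(e^{-iθ} - 1) / (π² x y)` with `θ = πxy` is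
`2 (1 - cos θ) / (π² x y)`.
-/

open MeasureTheory

noncomputable def tConv (F G : ℝ × ℝ → ℂ) : ℝ × ℝ → ℂ :=
  fun p => ∫ q : ℝ × ℝ, F (p.1 - q.1, p.2 - q.2) * G q *
    Complex.exp (Real.pi * Complex.I * ((q.1 : ℂ) * p.2 - (q.2 : ℂ) * p.1))

noncomputable def phi1 : ℝ × ℝ → ℂ :=
  fun p => if p.1 ∈ Set.Ico (0:ℝ) 1 ∧ p.2 ∈ Set.Ico (0:ℝ) 1 then 1 else 0

noncomputable def phiN : ℕ → (ℝ × ℝ → ℂ)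
  | 0 => 0
  | 1 => phi1
  | (n+2) => tConv (phiN (n+1)) phi1

open Set Complex
open scoped Real

lemma phi1_apply (p : ℝ × ℝ) :
    phi1 p = (Ico 0 1).indicator 1 p.1 * (Ico 0 1).indicator 1 p.2 := by
  simp only [phi1, indicator_apply, Pi.one_apply, ite_zero_mul_ite_zero, mul_one]

lemma indicator_Ico_sub_mul_indicator_Ico_ae_eq {x : ℝ} (hx : x ≤ 1) (f : ℝ → ℂ) :
    (fun u => (Ico 0 1).indicator 1 (x - u) * (Ico 0 1).indicator 1 u * f u)
      =ᵐ[volume] (Ioc 0 x).indicator f := by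
  filter_upwards [volume.ae_ne 0, volume.ae_ne x] with u hu₀ hux
  simp only [indicator_apply, mem_Ico, mem_Ioc, Pi.one_apply]
  split_ifs <;> first | (exfalso; grind) | simp

lemma tConv_phi1_phi1 {x y : ℝ} (hx₀ : 0 ≤ x) (hx₁ : x ≤ 1) (hy₀ : 0 ≤ y) (hy₁ : y ≤ 1) :
    tConv phi1 phi1 (x, y) =
      (∫ u in 0..x, exp (π * I * y * u)) * ∫ v in 0..y, exp (-(π * I * x) * v) := by
  set f : ℝ → ℂ := fun u =>
    (Ico 0 1).indicator 1 (x - u) * (Ico 0 1).indicator 1 u * exp (π * I * y * u)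
  set g : ℝ → ℂ := fun v =>
    (Ico 0 1).indicator 1 (y - v) * (Ico 0 1).indicator 1 v * exp (-(π * I * x) * v)
  have hsplit : ∀ q : ℝ × ℝ,
      phi1 (x - q.1, y - q.2) * phi1 q * exp (π * I * (q.1 * y - q.2 * x)) = f q.1 * g q.2 := by
    intro q
    have hexp : exp (π * I * (q.1 * y - q.2 * x)) =
        exp (π * I * y * q.1) * exp (-(π * I * x) * q.2) := by
      rw [← exp_add]; ring_nf
    rw [phi1_apply, phi1_apply, hexp]
    ring
  simp only [tConv, hsplit]
  rw [Measure.volume_eq_prod, integral_prod_mul f g,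
    integral_congr_ae (indicator_Ico_sub_mul_indicator_Ico_ae_eq hx₁ _),
    integral_congr_ae (indicator_Ico_sub_mul_indicator_Ico_ae_eq hy₁ _),
    integral_indicator measurableSet_Ioc, integral_indicator measurableSet_Ioc,
    intervalIntegral.integral_of_le hx₀, intervalIntegral.integral_of_le hy₀]

lemma exp_mul_I_sub_one_mul_exp_neg_mul_I_sub_one (θ : ℂ) :
    (exp (θ * I) - 1) * (exp (-θ * I) - 1) = 2 * (1 - cos θ) := by
  have hprod : exp (θ * I) * exp (-θ * I) = 1 := by rw [← exp_add]; simp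
  linear_combination hprod + two_cos θ

theorem phi2_formula_first_square (x y : ℝ)
    (hx : x ∈ Set.Ioc (0:ℝ) 1) (hy : y ∈ Set.Ioc (0:ℝ) 1) :
    phiN 2 (x, y) =
      (((2 / (Real.pi ^ 2 * x * y)) * (1 - Real.cos (Real.pi * x * y)) : ℝ) : ℂ) := by
  obtain ⟨hx₀, hx₁⟩ := hx
  obtain ⟨hy₀, hy₁⟩ := hy
  have hθ := exp_mul_I_sub_one_mul_exp_neg_mul_I_sub_one (π * x * y)
  have hden : π * I * y * -(π * I * x) = (π ^ 2 * x * y : ℂ) := by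
    linear_combination (-(π : ℂ) ^ 2 * x * y) * I_sq
  change tConv phi1 phi1 (x, y) = _
  rw [tConv_phi1_phi1 hx₀.le hx₁ hy₀.le hy₁, integral_exp_mul_complex (by simp [hy₀.ne']),
    integral_exp_mul_complex (by simp [hx₀.ne'])]
  push_cast
  simp only [mul_zero, exp_zero]
  rw [div_mul_div_comm, hden,
    show π * I * y * x = π * x * y * I by ring,
    show -(π * I * x) * y = -(π * x * y) * I by ring, hθ]
  ring
end

section
/- The second order twisted B-spline satisfies, for (x,y) ∈ (1,2) × (1,2), φ₂(x,y) = (2/(π² x y)) (cos(π(x - y)) - cos(π(x + y - x y))). -/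
/-!
For `x, y ∈ (1, 2)` the integrand `φ₁(x - u, y - v) φ₁(u, v) e^{πi(uy - vx)}` of the twisted
convolution splits as a function of `u` supported on `(x - 1, 1)` times a function of `v`
supported on `(y - 1, 1)`, so `φ₂(x, y)` is a product of two elementary exponential integrals.
Multiplying these out, the four exponentials pair up into `2 cos(π(x - y)) - 2 cos(π(x + y - xy))`.
-/

open MeasureTheory

open Complex Set
open scoped Real

theorem tConv_separable_apply (a b c d : ℝ → ℂ) (x y : ℝ) :
    tConv (fun p => a p.1 * b p.2) (fun q => c q.1 * d q.2) (x, y) =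
      (∫ u, a (x - u) * c u * exp (π * I * y * u)) *
        ∫ v, b (y - v) * d v * exp (-(π * I * x) * v) := by
  rw [← integral_prod_mul, ← Measure.volume_eq_prod]
  unfold tConv
  congr 1
  funext q
  dsimp only
  have hexp : exp (π * I * (q.1 * y - q.2 * x)) =
      exp (π * I * y * q.1) * exp (-(π * I * x) * q.2) := by
    rw [← Complex.exp_add]
    ring_nf
  rw [hexp]
  ring

noncomputable def unitBox : ℝ → ℂ := (Ico 0 1).indicator 1

theorem phi1_eq_unitBox_mul : phi1 = fun p => unitBox p.1 * unitBox p.2 := by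
  ext p
  simp only [phi1, unitBox, indicator_apply, Pi.one_apply, ite_zero_mul_ite_zero, mul_one]

theorem unitBox_sub_mul_unitBox {x : ℝ} (hx : 1 ≤ x) (u : ℝ) :
    unitBox (x - u) * unitBox u = (Ioo (x - 1) 1).indicator 1 u := by
  simp only [unitBox, indicator_apply, Pi.one_apply, ite_zero_mul_ite_zero, mul_one]
  refine if_congr ?_ rfl rfl
  simp only [mem_Ico, mem_Ioo]
  constructor
  · rintro ⟨⟨h₁, h₂⟩, -, h₃⟩
    exact ⟨by linarith, h₃⟩
  · rintro ⟨h₁, h₂⟩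
    exact ⟨⟨by linarith, by linarith⟩, by linarith, h₂⟩

theorem integral_unitBox_sub_mul_unitBox_mul_exp {x : ℝ} (hx₁ : 1 ≤ x) (hx₂ : x ≤ 2) {c : ℂ}
    (hc : c ≠ 0) :
    ∫ u, unitBox (x - u) * unitBox u * exp (c * u) = (exp c - exp (c * (x - 1))) / c := by
  have hsupp : (fun u : ℝ => unitBox (x - u) * unitBox u * exp (c * u)) =
      (Ioo (x - 1) 1).indicator fun u => exp (c * u) := by
    funext u
    simp only [unitBox_sub_mul_unitBox hx₁, indicator_apply, Pi.one_apply, ite_mul, one_mul,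
      zero_mul]
  rw [hsupp, integral_indicator measurableSet_Ioo, ← integral_Ioc_eq_integral_Ioo,
    ← intervalIntegral.integral_of_le (by linarith), integral_exp_mul_complex hc]
  push_cast
  ring_nf

theorem exp_sub_exp_mul_exp_sub_exp (x y : ℝ) :
    (exp (π * I * y) - exp (π * I * y * (x - 1))) *
        (exp (-(π * I * x)) - exp (-(π * I * x) * (y - 1))) =
      2 * cos (π * (x - y)) - 2 * cos (π * (x + y - x * y)) := by
  simp only [Complex.cos, mul_sub, sub_mul, ← exp_add]
  ring_nf

theorem phi2_formula_last_square (x y : ℝ)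
    (hx : x ∈ Set.Ioo (1:ℝ) 2) (hy : y ∈ Set.Ioo (1:ℝ) 2) :
    phiN 2 (x, y) =
      (((2 / (Real.pi ^ 2 * x * y)) *
        (Real.cos (Real.pi * (x - y)) - Real.cos (Real.pi * (x + y - x * y))) : ℝ) : ℂ) := by
  obtain ⟨hx₁, hx₂⟩ := hx
  obtain ⟨hy₁, hy₂⟩ := hy
  have hπ : (π : ℂ) ≠ 0 := ofReal_ne_zero.mpr Real.pi_ne_zero
  have hx₀ : (x : ℂ) ≠ 0 := ofReal_ne_zero.mpr (by positivity)
  have hy₀ : (y : ℂ) ≠ 0 := ofReal_ne_zero.mpr (by positivity)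
  have hden : π * I * y * -(π * I * x) = (π : ℂ) ^ 2 * x * y := by
    linear_combination (-(π : ℂ) ^ 2 * x * y) * I_sq
  calc phiN 2 (x, y)
      = tConv (fun p => unitBox p.1 * unitBox p.2) (fun q => unitBox q.1 * unitBox q.2)
          (x, y) := by
        rw [phiN, phiN, phi1_eq_unitBox_mul]
    _ = (exp (π * I * y) - exp (π * I * y * (x - 1))) / (π * I * y) *
          ((exp (-(π * I * x)) - exp (-(π * I * x) * (y - 1))) / -(π * I * x)) := by
        rw [tConv_separable_apply,
          integral_unitBox_sub_mul_unitBox_mul_exp hx₁.le hx₂.le (by simp [*]),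
          integral_unitBox_sub_mul_unitBox_mul_exp hy₁.le hy₂.le (by simp [*])]
    _ = (2 * cos (π * (x - y)) - 2 * cos (π * (x + y - x * y))) / (π ^ 2 * x * y) := by
        rw [div_mul_div_comm, exp_sub_exp_mul_exp_sub_exp, hden]
    _ = _ := by
        push_cast
        ring
end

section
/- For f ∈ L¹(ℝ²), ∬_{ℝ²} f(x,y) φ₂(x,y) dx dy = ∬_{Q²} e^{πi(x₂ y₁ − y₂ x₁)} f(x₁+x₂, y₁+y₂) dx₁ dy₁ dx₂ dy₂, where Q = [0,1]×[0,1]. -/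
/-!
Write `φ₂ = φ₁ × φ₁` as the twisted convolution integral and apply Fubini to get an integral of
`f p φ₁(p - q) φ₁(q) e^{πi ω(q, p)}` over `(p, q)`, with `ω(q, p) = q₁ p₂ - q₂ p₁`. The shear
`p = r + q` preserves Lebesgue measure, and since `ω` is alternating the phase becomes
`e^{πi ω(q, r)}`, independent of the shift. The two indicators then cut the domain down to a
product of unit squares, and a fourfold Fubini gives the iterated integral; the boundaries of the
squares are null, so half-open and closed squares give the same result.
-/

open MeasureTheory

open Complex Set

section Fubini

variable {α β γ δ E : Type*} [MeasurableSpace α] [MeasurableSpace β] [MeasurableSpace γ]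
  [MeasurableSpace δ] [NormedAddCommGroup E] [NormedSpace ℝ E]
  {μ : Measure α} {ν : Measure β} {ρ : Measure γ} {σ : Measure δ}
  [SFinite μ] [SFinite ν] [SFinite ρ] [SFinite σ]

theorem integral_prod_prod {g : (α × β) × (γ × δ) → E}
    (hg : Integrable g ((μ.prod ν).prod (ρ.prod σ))) :
    ∫ z, g z ∂((μ.prod ν).prod (ρ.prod σ)) =
      ∫ a, ∫ b, ∫ c, ∫ d, g ((a, b), (c, d)) ∂σ ∂ρ ∂ν ∂μ := by
  rw [integral_prod _ hg, integral_prod _ hg.integral_prod_left]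
  have hfib : ∀ᵐ p ∂μ.prod ν,
      ∫ q, g (p, q) ∂(ρ.prod σ) = ∫ c, ∫ d, g (p, (c, d)) ∂σ ∂ρ := by
    filter_upwards [hg.prod_right_ae] with p hp using integral_prod _ hp
  exact integral_congr_ae ((Measure.ae_ae_of_ae_prod hfib).mono fun a ha => integral_congr_ae ha)

end Fubini

noncomputable def twistPhase (p q : ℝ × ℝ) : ℂ :=
  exp (Real.pi * I * ((q.1 : ℂ) * p.2 - (q.2 : ℂ) * p.1))

theorem tConv_apply (F G : ℝ × ℝ → ℂ) (p : ℝ × ℝ) :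
    tConv F G p = ∫ q, F (p - q) * G q * twistPhase p q := rfl

theorem norm_twistPhase (p q : ℝ × ℝ) : ‖twistPhase p q‖ = 1 := by
  rw [twistPhase, ← norm_exp_ofReal_mul_I (Real.pi * (q.1 * p.2 - q.2 * p.1))]
  push_cast
  ring_nf

-- The symplectic form `ω(q, p) = q.1 p.2 - q.2 p.1` is alternating, so `ω(q, q) = 0`.
theorem twistPhase_add_self (p q : ℝ × ℝ) : twistPhase (p + q) q = twistPhase p q := by
  simp only [twistPhase, Prod.fst_add, Prod.snd_add]
  push_cast
  ring_nf

noncomputable def tConvIntegrand (f F G : ℝ × ℝ → ℂ) (z : (ℝ × ℝ) × (ℝ × ℝ)) : ℂ :=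
  f z.1 * (F (z.1 - z.2) * G z.2 * twistPhase z.1 z.2)

section TwistedConvolution

variable {f F G : ℝ × ℝ → ℂ} {C : ℝ}

theorem integrable_tConvIntegrand (hf : Integrable f) (hF : Measurable F)
    (hFC : ∀ p, ‖F p‖ ≤ C) (hG : Integrable G) :
    Integrable (tConvIntegrand f F G) (volume.prod volume) := by
  have hmeas : AEStronglyMeasurable (tConvIntegrand f F G) (volume.prod volume) := by
    have hphase : Continuous fun z : (ℝ × ℝ) × (ℝ × ℝ) => twistPhase z.1 z.2 := by
      unfold twistPhase; fun_prop
    exact hf.1.comp_fst.mul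
      ((((hF.comp (measurable_fst.sub measurable_snd)).aestronglyMeasurable).mul
        hG.1.comp_snd).mul hphase.aestronglyMeasurable)
  refine ((hf.norm.mul_prod hG.norm).const_mul C).mono' hmeas (.of_forall fun z => ?_)
  rw [tConvIntegrand, norm_mul, norm_mul, norm_mul, norm_twistPhase, mul_one]
  calc ‖f z.1‖ * (‖F (z.1 - z.2)‖ * ‖G z.2‖) ≤ ‖f z.1‖ * (C * ‖G z.2‖) := by
        gcongr; exact hFC _
    _ = C * (‖f z.1‖ * ‖G z.2‖) := by ring

theorem tConvIntegrand_add_right (f F G : ℝ × ℝ → ℂ) (r q : ℝ × ℝ) :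
    tConvIntegrand f F G (r + q, q) = f (r + q) * F r * G q * twistPhase r q := by
  rw [tConvIntegrand, add_sub_cancel_right, twistPhase_add_self, ← mul_assoc, ← mul_assoc]

theorem integrable_shear_tConvIntegrand (hf : Integrable f) (hF : Measurable F)
    (hFC : ∀ p, ‖F p‖ ≤ C) (hG : Integrable G) :
    Integrable
      (fun z : (ℝ × ℝ) × (ℝ × ℝ) => f (z.1 + z.2) * F z.1 * G z.2 * twistPhase z.1 z.2)
      (volume.prod volume) := by
  have h := integrable_tConvIntegrand hf hF hFC hG
  simpa [Function.comp_def, tConvIntegrand_add_right] using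
    ((measurePreserving_add_prod volume volume).integrable_comp h.1).2 h

theorem integral_mul_tConv (hf : Integrable f) (hF : Measurable F) (hFC : ∀ p, ‖F p‖ ≤ C)
    (hG : Integrable G) :
    ∫ p, f p * tConv F G p =
      ∫ z : (ℝ × ℝ) × (ℝ × ℝ), f (z.1 + z.2) * F z.1 * G z.2 * twistPhase z.1 z.2
        ∂(volume.prod volume) := by
  have h := integrable_tConvIntegrand hf hF hFC hG
  have hshear := measurePreserving_add_prod (volume : Measure (ℝ × ℝ)) volume
  calc ∫ p, f p * tConv F G p = ∫ p, ∫ q, tConvIntegrand f F G (p, q) := by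
        simp only [tConv_apply, ← integral_const_mul]; rfl
    _ = ∫ z, tConvIntegrand f F G z ∂(volume.prod volume) := (integral_prod _ h).symm
    _ = ∫ z, tConvIntegrand f F G (z.1 + z.2, z.2) ∂(volume.prod volume) := by
        have hmap := integral_map hshear.aemeasurable (hshear.map_eq.symm ▸ h.1)
        rwa [hshear.map_eq] at hmap
    _ = _ := by simp only [tConvIntegrand_add_right]

end TwistedConvolution

theorem phi1_eq_indicator : phi1 = (Ico (0 : ℝ) 1 ×ˢ Ico (0 : ℝ) 1).indicator 1 := by
  ext p
  simp only [phi1, indicator_apply, mem_prod, Pi.one_apply]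

theorem measurable_phi1 : Measurable phi1 := by
  rw [phi1_eq_indicator]
  exact measurable_one.indicator (measurableSet_Ico.prod measurableSet_Ico)

theorem integrable_phi1 : Integrable phi1 := by
  rw [phi1_eq_indicator, integrable_indicator_iff (measurableSet_Ico.prod measurableSet_Ico)]
  refine integrableOn_const ?_ (by simp)
  simp [Measure.volume_eq_prod, Measure.prod_prod]

theorem norm_phi1_le (p : ℝ × ℝ) : ‖phi1 p‖ ≤ 1 := by
  unfold phi1; split_ifs <;> simp

theorem integral_against_phi2 (f : ℝ × ℝ → ℂ) (hf : Integrable f) :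
    (∫ p : ℝ × ℝ, f p * phiN 2 p) =
      ∫ x₁ in Set.Icc (0:ℝ) 1, ∫ y₁ in Set.Icc (0:ℝ) 1,
        ∫ x₂ in Set.Icc (0:ℝ) 1, ∫ y₂ in Set.Icc (0:ℝ) 1,
          Complex.exp (Real.pi * Complex.I * ((x₂ : ℂ) * y₁ - (y₂ : ℂ) * x₁)) *
            f (x₁ + x₂, y₁ + y₂) := by
  set Q : Set (ℝ × ℝ) := Ico (0 : ℝ) 1 ×ˢ Ico (0 : ℝ) 1
  have hQ : MeasurableSet (Q ×ˢ Q) :=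
    (measurableSet_Ico.prod measurableSet_Ico).prod (measurableSet_Ico.prod measurableSet_Ico)
  have hind : (fun z : (ℝ × ℝ) × (ℝ × ℝ) =>
        f (z.1 + z.2) * phi1 z.1 * phi1 z.2 * twistPhase z.1 z.2) =
      (Q ×ˢ Q).indicator fun z => twistPhase z.1 z.2 * f (z.1 + z.2) := by
    ext z
    rw [mul_assoc (f _), phi1_eq_indicator, ← indicator_prod_one]
    by_cases hz : z ∈ Q ×ˢ Q <;> simp [hz, Q, mul_comm]
  have hμ : (volume.prod volume).restrict (Q ×ˢ Q) =
      ((volume.restrict (Icc (0 : ℝ) 1)).prod (volume.restrict (Icc (0 : ℝ) 1))).prod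
        ((volume.restrict (Icc (0 : ℝ) 1)).prod (volume.restrict (Icc (0 : ℝ) 1))) := by
    simp only [Q, ← Measure.prod_restrict, Measure.volume_eq_prod,
      Measure.restrict_congr_set Ico_ae_eq_Icc]
  have hint := integrable_shear_tConvIntegrand hf measurable_phi1 norm_phi1_le integrable_phi1
  rw [hind, integrable_indicator_iff hQ, IntegrableOn, hμ] at hint
  rw [show phiN 2 = tConv phi1 phi1 from rfl,
    integral_mul_tConv hf measurable_phi1 norm_phi1_le integrable_phi1, hind,
    integral_indicator hQ, hμ, integral_prod_prod hint]
  rfl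
end

section
/- The kernel of the Weyl transform of φ₁ is K_{φ₁}(ξ,η) = e^{(πi/2)(ξ+η)} sinc((ξ+η)/2) χ_{[0,1)}(η−ξ), where sinc(t) = sin(πt)/(πt) for t ≠ 0 and sinc(0)=1. -/
open MeasureTheory

/-- Normalized sinc: sinc t = sin(πt)/(πt) for t ≠ 0, sinc 0 = 1. -/
noncomputable def mySinc (t : ℝ) : ℝ :=
  if t = 0 then 1 else Real.sin (Real.pi * t) / (Real.pi * t)

/-! For fixed `η - ξ` the integrand is `exp (2 a i x)` on `[0, 1)` with `a = π (ξ + η) / 2`, and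
`∫₀¹ exp (2 a i x) dx = (exp (2 a i) - 1) / (2 a i) = exp (a i) · sin a / a`. -/

open Complex

lemma mySinc_eq_sinc (t : ℝ) : mySinc t = Real.sinc (Real.pi * t) := by
  simp [mySinc, Real.sinc, Real.pi_ne_zero]

lemma exp_two_mul_I_sub_one_div (a : ℝ) (ha : a ≠ 0) :
    (exp (2 * a * I) - 1) / (2 * a * I) = exp (a * I) * (Real.sin a / a : ℝ) := by
  have hinv : exp (a * I) * exp (-(a * I)) = 1 := by rw [← exp_add]; simp
  have hsq : exp (a * I) * exp (a * I) = exp (2 * a * I) := by rw [← exp_add]; ring_nf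
  have haC : (a : ℂ) ≠ 0 := ofReal_ne_zero.mpr ha
  push_cast
  rw [Complex.sin, div_eq_iff (by simp [haC, I_ne_zero])]
  field_simp
  linear_combination (-I ^ 2) * hinv + I ^ 2 * hsq + (exp (2 * a * I) - 1) * I_sq

lemma integral_exp_two_mul_I (a : ℝ) :
    ∫ x in (0:ℝ)..1, exp (2 * a * I * x) = exp (a * I) * Real.sinc a := by
  rcases eq_or_ne a 0 with rfl | ha
  · simp
  · have hc : 2 * (a : ℂ) * I ≠ 0 := by simp [ha, I_ne_zero]
    rw [integral_exp_mul_complex hc, Real.sinc_of_ne_zero ha]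
    simpa using exp_two_mul_I_sub_one_div a ha

lemma phi1_mul_eq_indicator (y : ℝ) (g : ℝ → ℂ) (x : ℝ) :
    phi1 (x, y) * g x = (if y ∈ Set.Ico (0:ℝ) 1 then 1 else 0) * (Set.Ico 0 1).indicator g x := by
  by_cases hx : x ∈ Set.Ico (0:ℝ) 1 <;> by_cases hy : y ∈ Set.Ico (0:ℝ) 1 <;> simp [phi1, hx, hy]

theorem weyl_kernel_phi1 (ξ η : ℝ) :
    (∫ x : ℝ, phi1 (x, η - ξ) * Complex.exp (Real.pi * Complex.I * x * ((ξ : ℂ) + η))) =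
      Complex.exp (Real.pi * Complex.I / 2 * ((ξ : ℂ) + η)) * ((mySinc ((ξ + η) / 2) : ℝ) : ℂ) *
        (if η - ξ ∈ Set.Ico (0:ℝ) 1 then 1 else 0) := by
  set a : ℝ := Real.pi * ((ξ + η) / 2)
  have hexp (x : ℝ) : exp (Real.pi * I * x * ((ξ : ℂ) + η)) = exp (2 * a * I * x) := by
    congr 1; push_cast [a]; ring
  have hphase : exp (Real.pi * I / 2 * ((ξ : ℂ) + η)) = exp (a * I) := by
    congr 1; push_cast [a]; ring
  have hintegrand (x : ℝ) : phi1 (x, η - ξ) * exp (Real.pi * I * x * ((ξ : ℂ) + η)) =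
      (if η - ξ ∈ Set.Ico (0:ℝ) 1 then 1 else 0) *
        (Set.Ico 0 1).indicator (fun x : ℝ => exp (2 * a * I * x)) x := by
    rw [hexp]; exact phi1_mul_eq_indicator _ (fun x : ℝ => exp (2 * a * I * x)) x
  rw [funext hintegrand, integral_const_mul, integral_indicator measurableSet_Ico,
    integral_Ico_eq_integral_Ioc, ← intervalIntegral.integral_of_le zero_le_one,
    integral_exp_two_mul_I, hphase, mySinc_eq_sinc]
  ring
end

section
/- The improper integral lim_{M→∞} ∫_{−M}^{M} ∫_{−M}^{M} e^{πi(⌊y⌋ x − ⌊x⌋ y)} dx dy equals 1. -/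
/-!
On the unit square `[k, k+1) × [l, l+1)` the integrand is `e^{πilx} e^{-πiky}`. Since
`∫_m^{m+1} e^{πint} dt = e^{πinm} c(n)` with `c(n) = ∫_0^1 e^{πint} dt`, the two phases
`e^{πilk}` and `e^{-πikl}` cancel and the square contributes `c(l) c(-k)`. So the integral over
`[-M, M]²` is `(∑_{-M ≤ n < M} c(n)) (∑_{-M ≤ n < M} c(-n))`. As `c(0) = 1` and `c` is odd
away from `0`, these sums collapse to `1 - c(M)` and `1 + c(M)`, and `c(M) = O(1/M)`.
-/

open MeasureTheory intervalIntegral Complex Filter Topology Real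

theorem eqOn_floor_uIoo {α : Type*} (g : ℤ → ℝ → α) (k : ℤ) :
    Set.EqOn (fun x => g ⌊x⌋ x) (g k) (Set.uIoo (k : ℝ) (k + 1)) := by
  intro x hx
  rw [Set.uIoo_of_le (by linarith)] at hx
  simp only [Int.floor_eq_iff.mpr ⟨hx.1.le, hx.2⟩]

section UnitIntervals

variable {E : Type*} [NormedAddCommGroup E]

theorem intervalIntegrable_of_unit_intervals {f : ℝ → E} {m n : ℤ} (hmn : m ≤ n)
    (hf : ∀ k ∈ Finset.Ico m n, IntervalIntegrable f volume k (k + 1)) :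
    IntervalIntegrable f volume m n := by
  induction n, hmn using Int.leInduction with
  | base => exact IntervalIntegrable.refl
  | succ n hmn ih =>
    push_cast
    exact (ih fun k hk => hf k (Finset.Ico_subset_Ico_right (by omega) hk)).trans
      (hf n (by simp [hmn]))

theorem integral_eq_sum_unit_intervals [NormedSpace ℝ E] {f : ℝ → E} {m n : ℤ}
    (hmn : m ≤ n)
    (hf : ∀ k ∈ Finset.Ico m n, IntervalIntegrable f volume k (k + 1)) :
    ∫ x in (m : ℝ)..n, f x = ∑ k ∈ Finset.Ico m n, ∫ x in (k : ℝ)..k + 1, f x := by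
  induction n, hmn using Int.leInduction with
  | base => simp
  | succ n hmn ih =>
    have hf' : ∀ k ∈ Finset.Ico m n, IntervalIntegrable f volume k (k + 1) :=
      fun k hk => hf k (Finset.Ico_subset_Ico_right (by omega) hk)
    rw [← Finset.sum_Ico_add_eq_sum_Ico_add_one hmn, ← ih hf', Int.cast_add, Int.cast_one,
      integral_add_adjacent_intervals (intervalIntegrable_of_unit_intervals hmn hf')
        (hf n (by simp [hmn]))]

theorem setIntegral_Icc_eq_sum_unit_intervals [NormedSpace ℝ E] {f : ℝ → E} (M : ℕ)
    (hf : ∀ k ∈ Finset.Ico (-(M : ℤ)) M, IntervalIntegrable f volume k (k + 1)) :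
    ∫ x in Set.Icc (-(M : ℝ)) M, f x =
      ∑ k ∈ Finset.Ico (-(M : ℤ)) M, ∫ x in (k : ℝ)..k + 1, f x := by
  rw [integral_Icc_eq_integral_Ioc, ← integral_of_le (by linarith [M.cast_nonneg (α := ℝ)]),
    ← integral_eq_sum_unit_intervals (by omega) hf]
  push_cast
  rfl

theorem integral_floor_unit_interval [NormedSpace ℝ E] (g : ℤ → ℝ → E) (k : ℤ) :
    ∫ x in (k : ℝ)..k + 1, g ⌊x⌋ x = ∫ x in (k : ℝ)..k + 1, g k x :=
  integral_congr_uIoo (eqOn_floor_uIoo g k)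

theorem intervalIntegrable_floor_unit_interval {g : ℤ → ℝ → E} {k : ℤ}
    (hg : IntervalIntegrable (g k) volume k (k + 1)) :
    IntervalIntegrable (fun x => g ⌊x⌋ x) volume k (k + 1) :=
  (intervalIntegrable_congr_uIoo (eqOn_floor_uIoo g k)).mpr hg

end UnitIntervals

theorem sum_Ico_neg_natCast_eq_of_odd {A : Type*} [AddCommGroup A] (f : ℤ → A)
    (hf : ∀ n ≠ 0, f (-n) = -f n) (M : ℕ) :
    ∑ n ∈ Finset.Ico (-(M : ℤ)) M, f n = f 0 - f M := by
  induction M with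
  | zero => simp
  | succ M ih =>
    have hIco : Finset.Ico (-((M + 1 : ℕ) : ℤ)) (M + 1 : ℕ) =
        insert (-(M : ℤ) - 1) (insert (M : ℤ) (Finset.Ico (-(M : ℤ)) M)) := by
      ext n; simp only [Finset.mem_Ico, Finset.mem_insert]; omega
    rw [hIco, Finset.sum_insert (by simp), Finset.sum_insert (by simp), ih,
      show -(M : ℤ) - 1 = -((M + 1 : ℕ) : ℤ) by push_cast; ring, hf _ (by omega)]
    abel

noncomputable def phase (n : ℤ) (t : ℝ) : ℂ := cexp (π * I * n * t)

noncomputable def phaseIntegral (n : ℤ) : ℂ := ∫ t in (0 : ℝ)..1, phase n t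

theorem continuous_phase (n : ℤ) : Continuous (phase n) := by
  unfold phase; fun_prop

theorem phase_mul_phase_neg (n m : ℤ) : phase n m * phase (-m) n = 1 := by
  rw [phase, phase, ← Complex.exp_add, ← Complex.exp_zero]
  congr 1
  push_cast
  ring

theorem integral_exp_mul_unit_interval (c : ℂ) (a : ℝ) :
    ∫ t in a..a + 1, cexp (c * t) = cexp (c * a) * ∫ t in (0 : ℝ)..1, cexp (c * t) := by
  calc ∫ t in a..a + 1, cexp (c * t) = ∫ t in (0 : ℝ)..1, cexp (c * ↑(t + a)) := by
        rw [integral_comp_add_right (fun t : ℝ => cexp (c * t)), zero_add, add_comm 1]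
    _ = ∫ t in (0 : ℝ)..1, cexp (c * a) * cexp (c * t) := by
        congr 1 with t
        rw [← Complex.exp_add]
        push_cast
        ring_nf
    _ = cexp (c * a) * ∫ t in (0 : ℝ)..1, cexp (c * t) :=
        intervalIntegral.integral_const_mul _ _

theorem integral_phase_unit_interval (n m : ℤ) :
    ∫ t in (m : ℝ)..m + 1, phase n t = phase n m * phaseIntegral n :=
  integral_exp_mul_unit_interval _ _

theorem phaseIntegral_zero : phaseIntegral 0 = 1 := by
  simp [phaseIntegral, phase]

theorem phaseIntegral_of_ne_zero {n : ℤ} (hn : n ≠ 0) :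
    phaseIntegral n = (cexp (π * I * n) - 1) / (π * I * n) := by
  have hc : (π : ℂ) * I * n ≠ 0 := by simp [hn, Real.pi_ne_zero]
  simp only [phaseIntegral, phase, integral_exp_mul_complex hc]
  simp

theorem exp_pi_mul_I_mul_int_neg (n : ℤ) : cexp (π * I * (-n : ℤ)) = cexp (π * I * n) :=
  Complex.exp_eq_exp_iff_exists_int.mpr ⟨-n, by push_cast; ring⟩

theorem phaseIntegral_neg {n : ℤ} (hn : n ≠ 0) : phaseIntegral (-n) = -phaseIntegral n := by
  rw [phaseIntegral_of_ne_zero hn, phaseIntegral_of_ne_zero (neg_ne_zero.mpr hn),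
    exp_pi_mul_I_mul_int_neg, Int.cast_neg, mul_neg, div_neg]

theorem norm_phaseIntegral_le {n : ℤ} (hn : n ≠ 0) :
    ‖phaseIntegral n‖ ≤ 2 / (π * |(n : ℝ)|) := by
  have hnum : ‖cexp (π * I * n) - 1‖ ≤ 2 := by
    refine (norm_sub_le _ _).trans (le_of_eq ?_)
    rw [Complex.norm_exp]
    norm_num
  have hden : ‖(π : ℂ) * I * n‖ = π * |(n : ℝ)| := by
    simp [abs_of_pos Real.pi_pos]
  rw [phaseIntegral_of_ne_zero hn, norm_div, hden]
  gcongr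

theorem tendsto_phaseIntegral_atTop : Tendsto (fun M : ℕ => phaseIntegral M) atTop (𝓝 0) := by
  refine squeeze_zero_norm' ?_ (tendsto_const_div_atTop_nhds_zero_nat (2 / π))
  filter_upwards [eventually_ne_atTop 0] with M hM
  simpa [div_div] using norm_phaseIntegral_le (n := M) (by exact_mod_cast hM)

theorem sum_Ico_phaseIntegral (M : ℕ) :
    ∑ n ∈ Finset.Ico (-(M : ℤ)) M, phaseIntegral n = 1 - phaseIntegral M := by
  rw [sum_Ico_neg_natCast_eq_of_odd _ (fun n hn => phaseIntegral_neg hn), phaseIntegral_zero]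

theorem sum_Ico_phaseIntegral_neg {M : ℕ} (hM : M ≠ 0) :
    ∑ n ∈ Finset.Ico (-(M : ℤ)) M, phaseIntegral (-n) = 1 + phaseIntegral M := by
  rw [sum_Ico_neg_natCast_eq_of_odd (fun n => phaseIntegral (-n))
      (fun n hn => by rw [neg_neg, phaseIntegral_neg hn, neg_neg]),
    neg_zero, phaseIntegral_zero, phaseIntegral_neg (by exact_mod_cast hM), sub_neg_eq_add]

theorem exp_floor_phase_eq (x y : ℝ) :
    cexp (π * I * ((⌊y⌋ : ℂ) * x - (⌊x⌋ : ℂ) * y)) = phase ⌊y⌋ x * phase (-⌊x⌋) y := by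
  rw [phase, phase, ← Complex.exp_add]
  push_cast
  ring_nf

theorem setIntegral_Icc_exp_floor_phase (M : ℕ) (x : ℝ) :
    ∫ y in Set.Icc (-(M : ℝ)) M, cexp (π * I * ((⌊y⌋ : ℂ) * x - (⌊x⌋ : ℂ) * y)) =
      ∑ l ∈ Finset.Ico (-(M : ℤ)) M, phase l x * (phase (-⌊x⌋) l * phaseIntegral (-⌊x⌋)) := by
  simp_rw [exp_floor_phase_eq]
  rw [setIntegral_Icc_eq_sum_unit_intervals M fun l _ =>
    intervalIntegrable_floor_unit_interval (g := fun l y => phase l x * phase (-⌊x⌋) y)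
      ((continuous_const.mul (continuous_phase _)).intervalIntegrable _ _)]
  refine Finset.sum_congr rfl fun l _ => ?_
  rw [integral_floor_unit_interval (fun l y => phase l x * phase (-⌊x⌋) y) l,
    intervalIntegral.integral_const_mul, integral_phase_unit_interval]

theorem integral_sum_phase_floor_unit_interval (s : Finset ℤ) (k : ℤ) :
    ∫ x in (k : ℝ)..k + 1, ∑ l ∈ s, phase l x * (phase (-⌊x⌋) l * phaseIntegral (-⌊x⌋)) =
      ∑ l ∈ s, phaseIntegral l * phaseIntegral (-k) := by
  rw [integral_floor_unit_interval
      (fun k x => ∑ l ∈ s, phase l x * (phase (-k) l * phaseIntegral (-k))) k,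
    intervalIntegral.integral_finsetSum
      (f := fun l x => phase l x * (phase (-k) l * phaseIntegral (-k)))
      fun l _ => ((continuous_phase l).mul continuous_const).intervalIntegrable _ _]
  refine Finset.sum_congr rfl fun l _ => ?_
  rw [intervalIntegral.integral_mul_const, integral_phase_unit_interval]
  linear_combination (phaseIntegral l * phaseIntegral (-k)) * phase_mul_phase_neg l k

theorem integral_floor_phase_eq (M : ℕ) :
    ∫ x in Set.Icc (-(M : ℝ)) M, ∫ y in Set.Icc (-(M : ℝ)) M,
        cexp (π * I * ((⌊y⌋ : ℂ) * x - (⌊x⌋ : ℂ) * y)) =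
      (∑ n ∈ Finset.Ico (-(M : ℤ)) M, phaseIntegral n) *
        ∑ n ∈ Finset.Ico (-(M : ℤ)) M, phaseIntegral (-n) := by
  simp_rw [setIntegral_Icc_exp_floor_phase]
  rw [setIntegral_Icc_eq_sum_unit_intervals M fun k _ =>
    intervalIntegrable_floor_unit_interval
      (g := fun k x =>
        ∑ l ∈ Finset.Ico (-(M : ℤ)) M, phase l x * (phase (-k) l * phaseIntegral (-k)))
      ((continuous_finsetSum _ fun l _ =>
        (continuous_phase l).mul continuous_const).intervalIntegrable _ _),
    Finset.mul_sum]
  refine Finset.sum_congr rfl fun k _ => ?_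
  rw [integral_sum_phase_floor_unit_interval, Finset.sum_mul]

theorem improper_integral_floor_phase :
    Filter.Tendsto
      (fun M : ℕ => ∫ x in Set.Icc (-(M:ℝ)) (M:ℝ), ∫ y in Set.Icc (-(M:ℝ)) (M:ℝ),
        Complex.exp (Real.pi * Complex.I * ((⌊y⌋ : ℂ) * x - (⌊x⌋ : ℂ) * y)))
      Filter.atTop (nhds 1) := by
  have h := tendsto_phaseIntegral_atTop
  have hprod :=
    (tendsto_const_nhds (x := (1 : ℂ)).sub h).mul (tendsto_const_nhds (x := (1 : ℂ)).add h)
  rw [sub_zero, add_zero, mul_one] at hprod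
  refine hprod.congr' ?_
  filter_upwards [eventually_ne_atTop 0] with M hM
  rw [integral_floor_phase_eq, sum_Ico_phaseIntegral, sum_Ico_phaseIntegral_neg hM]
end

section
/- Let N_j(x,y) := 2^j φ₁(2^j x, 2^j y). For j < 0 and integers r, s with r,s ∈ {−2^{-j}+1, ..., 2^{-j}−1}, not both zero: ⟨T^t_{(r,s)} N_j, N_j⟩ = 0 if r = 0 or s = 0 or at least one of r,s is even; and if r ≥ 1 and s ≥ 1 both odd, ⟨T^t_{(r,s)} N_j, N_j⟩ = (2^{2j+1}/(π² r s))(1 − cos(π r s)); consequently |⟨T^t_{(r,s)} N_j, N_j⟩| ≤ 2^{2j+1}/π for all such (r,s). -/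
open MeasureTheory

noncomputable def tT (k l : ℤ) (φ : ℝ × ℝ → ℂ) : ℝ × ℝ → ℂ :=
  fun p => Complex.exp (Real.pi * Complex.I * ((l : ℂ) * p.1 - (k : ℂ) * p.2)) *
    φ (p.1 - k, p.2 - l)

noncomputable def Nj (j : ℤ) : ℝ × ℝ → ℂ :=
  fun p => (2 : ℂ) ^ j * phi1 ((2 : ℝ) ^ j * p.1, (2 : ℝ) ^ j * p.2)

noncomputable def innerNj (j r s : ℤ) : ℂ :=
  ∫ p : ℝ × ℝ, tT r s (Nj j) p * (starRingEnd ℂ) (Nj j p)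
/-!
`Nj j` is `2 ^ j` times the indicator of the square `[0, L)²`, `L = 2 ^ (-j)`, and the modulation
in `tT r s` is a product of characters in `x` and `y`, so the inner product factors into two
one-dimensional integrals of `exp (π i c x)` over the overlap `[max k 0, min (k + L) L)` of
`[0, L)` with its translate by `k`. With integer endpoints such an integral is
`((-1) ^ (c b) - (-1) ^ (c a)) / (π i c)`; as `L` is even, it vanishes when `c k` is even, equals
`2 / (π i c)` when `c k` is odd and `k ≥ 0`, and always has modulus at most `2 / π`.
-/

open Complex Set
open scoped Real

noncomputable def overlapIntegral (L k c : ℝ) : ℂ :=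
  ∫ x : ℝ, exp (π * I * c * x) *
    ((Ico 0 L).indicator (1 : ℝ → ℂ) (x - k) * (Ico 0 L).indicator 1 x)

lemma mul_mem_Ico_zero_one_iff {a x : ℝ} (ha : 0 < a) :
    a * x ∈ Ico 0 1 ↔ x ∈ Ico 0 a⁻¹ := by
  simp only [mem_Ico, mul_nonneg_iff_of_pos_left ha, ← lt_div_iff₀' ha, one_div]

lemma Nj_apply (j : ℤ) (p : ℝ × ℝ) :
    Nj j p = 2 ^ j * ((Ico 0 ((2 : ℝ) ^ (-j))).indicator 1 p.1 *
      (Ico 0 ((2 : ℝ) ^ (-j))).indicator 1 p.2) := by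
  have h2j : (0 : ℝ) < 2 ^ j := by positivity
  simp only [Nj, phi1, mul_mem_Ico_zero_one_iff h2j, zpow_neg, indicator_apply]
  split_ifs <;> simp_all

lemma conj_Nj (j : ℤ) (p : ℝ × ℝ) : starRingEnd ℂ (Nj j p) = Nj j p := by
  simp only [Nj_apply, indicator_apply]
  split_ifs <;> simp [map_zpow₀, conj_ofNat]

lemma innerNj_eq_mul (j r s : ℤ) :
    innerNj j r s = (2 ^ j) ^ 2 *
      (overlapIntegral (2 ^ (-j)) r s * overlapIntegral (2 ^ (-j)) s (-r)) := by
  have hexp : ∀ x y : ℝ, exp (π * I * (s * x - r * y)) =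
      exp (π * I * s * x) * exp (π * I * (-r : ℝ) * y) := by
    intro x y
    rw [← exp_add]; push_cast; ring_nf
  simp only [innerNj, tT, conj_Nj]
  simp only [Nj_apply, hexp, overlapIntegral, ofReal_intCast, ofReal_neg]
  generalize (2 : ℝ) ^ (-j) = L
  rw [Measure.volume_eq_prod, ← integral_prod_mul, ← integral_const_mul]
  congr 1; funext p
  ring

lemma overlapIntegral_eq_intervalIntegral {L k : ℝ} (c : ℝ) (hk : |k| ≤ L) :
    overlapIntegral L k c = ∫ x in max k 0..min (k + L) L, exp (π * I * c * x) := by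
  have hindicator : ∀ x : ℝ, exp (π * I * c * x) *
      ((Ico 0 L).indicator (1 : ℝ → ℂ) (x - k) * (Ico 0 L).indicator 1 x) =
      (Ico (max k 0) (min (k + L) L)).indicator (fun x : ℝ ↦ exp (π * I * c * x)) x := by
    intro x
    simp only [indicator_apply, mem_Ico, max_le_iff, lt_min_iff]
    split_ifs <;> simp <;> grind
  have hle : max k 0 ≤ min (k + L) L := by grind [abs_le]
  simp only [overlapIntegral, hindicator]
  rw [integral_indicator measurableSet_Ico, intervalIntegral.integral_of_le hle,
    integral_Ico_eq_integral_Ioc]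

lemma integral_exp_pi_I_intCast_mul {c : ℤ} (hc : c ≠ 0) (a b : ℤ) :
    ∫ x in (a : ℝ)..b, exp (π * I * ((c : ℝ) : ℂ) * x) =
      ((-1) ^ (c * b) - (-1) ^ (c * a)) / (π * I * c) := by
  have hc' : (π : ℂ) * I * c ≠ 0 := by simp [Real.pi_ne_zero, I_ne_zero, hc]
  have hexp : ∀ m : ℤ, exp (π * I * c * (m : ℝ)) = (-1) ^ (c * m) := by
    intro m
    rw [show (π : ℂ) * I * c * (m : ℝ) = (c * m : ℤ) * (π * I) by push_cast; ring,
      exp_int_mul, exp_pi_mul_I]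
  rw [ofReal_intCast, integral_exp_mul_complex hc', hexp, hexp]

lemma overlapIntegral_intCast {L k c : ℤ} (hk : |k| ≤ L) (hc : c ≠ 0) :
    overlapIntegral L k c =
      ((-1) ^ (c * min (k + L) L) - (-1) ^ (c * max k 0)) / (π * I * c) := by
  rw [overlapIntegral_eq_intervalIntegral _ (by exact_mod_cast hk)]
  exact_mod_cast integral_exp_pi_I_intCast_mul hc (max k 0) (min (k + L) L)

lemma overlapIntegral_eq_zero {L k c : ℤ} (hL : Even L) (hk : |k| ≤ L) (hc : c ≠ 0)
    (hck : Even (c * k)) : overlapIntegral L k c = 0 := by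
  have hcL : Even (c * L) := hL.mul_left c
  rw [overlapIntegral_intCast hk hc]
  rcases le_total 0 k with h | h
  · rw [min_eq_right (by omega), max_eq_left h, hcL.neg_one_zpow, hck.neg_one_zpow, sub_self,
      zero_div]
  · rw [min_eq_left (by omega), max_eq_right h, mul_add, (hck.add hcL).neg_one_zpow, mul_zero,
      zpow_zero, sub_self, zero_div]

lemma overlapIntegral_of_odd {L k c : ℤ} (hL : Even L) (hk₀ : 0 ≤ k) (hk : k ≤ L)
    (hc : c ≠ 0) (hck : Odd (c * k)) : overlapIntegral L k c = 2 / (π * I * c) := by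
  rw [overlapIntegral_intCast (abs_le.2 ⟨by omega, hk⟩) hc, min_eq_right (by omega),
    max_eq_left hk₀, (hL.mul_left c).neg_one_zpow, hck.neg_one_zpow]
  norm_num

lemma norm_overlapIntegral_le {L k c : ℤ} (hk : |k| ≤ L) (hc : c ≠ 0) :
    ‖overlapIntegral L k c‖ ≤ 2 / π := by
  have hnum : ∀ m n : ℤ, ‖(-1 : ℂ) ^ m - (-1) ^ n‖ ≤ 2 := fun m n ↦
    (norm_sub_le _ _).trans (by simp [norm_zpow]; norm_num)
  have hden : π ≤ ‖(π : ℂ) * I * c‖ := by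
    rw [norm_mul, norm_mul, norm_real, norm_I, Real.norm_of_nonneg Real.pi_pos.le, norm_intCast]
    have : (1 : ℝ) ≤ |(c : ℝ)| := by exact_mod_cast Int.one_le_abs hc
    nlinarith [Real.pi_pos]
  rw [overlapIntegral_intCast hk hc, norm_div]
  gcongr
  exact hnum _ _

lemma even_two_pow_toNat_neg {j : ℤ} (hj : j < 0) : Even ((2 : ℤ) ^ (-j).toNat) :=
  Int.even_pow.2 ⟨even_two, by omega⟩

lemma innerNj_eq_mul_of_nonpos {j : ℤ} (hj : j ≤ 0) (r s : ℤ) :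
    innerNj j r s = (2 ^ j) ^ 2 * (overlapIntegral ((2 ^ (-j).toNat : ℤ) : ℝ) r s *
      overlapIntegral ((2 ^ (-j).toNat : ℤ) : ℝ) s (-r : ℤ)) := by
  have hLj : (2 : ℝ) ^ (-j) = ((2 ^ (-j).toNat : ℤ) : ℝ) := by
    rw [Int.cast_pow, Int.cast_ofNat, ← zpow_natCast, Int.toNat_of_nonneg (by omega)]
  rw [innerNj_eq_mul, hLj, Int.cast_neg]

lemma innerNj_eq_zero_of_even_mul {j r s : ℤ} (hj : j < 0) (hr : |r| ≤ 2 ^ (-j).toNat)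
    (hs : |s| ≤ 2 ^ (-j).toNat) (hrs : ¬(r = 0 ∧ s = 0)) (h : Even (r * s)) :
    innerNj j r s = 0 := by
  rw [innerNj_eq_mul_of_nonpos hj.le]
  rcases eq_or_ne s 0 with rfl | hs0
  · rw [overlapIntegral_eq_zero (even_two_pow_toNat_neg hj) hs (by simpa using hrs) (by simp),
      mul_zero, mul_zero]
  · rw [overlapIntegral_eq_zero (even_two_pow_toNat_neg hj) hr hs0 (by rwa [mul_comm]),
      zero_mul, mul_zero]

lemma innerNj_of_odd {j r s : ℤ} (hj : j < 0) (hr : r ≤ 2 ^ (-j).toNat)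
    (hs : s ≤ 2 ^ (-j).toNat) (hr₁ : 1 ≤ r) (hs₁ : 1 ≤ s) (hr_odd : Odd r)
    (hs_odd : Odd s) :
    innerNj j r s =
      ((((2 : ℝ) ^ (2 * j + 1) / (π ^ 2 * r * s)) * (1 - Real.cos (π * r * s)) : ℝ) :
        ℂ) := by
  have hcos : Real.cos (π * r * s) = -1 := by
    rw [show π * r * s = ((r * s : ℤ) : ℝ) * π by push_cast; ring, Real.cos_int_mul_pi,
      (hr_odd.mul hs_odd).neg_one_zpow]
  have hL := even_two_pow_toNat_neg hj
  rw [innerNj_eq_mul_of_nonpos hj.le,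
    overlapIntegral_of_odd hL (by omega) hr (by omega) (by rw [mul_comm]; exact hr_odd.mul hs_odd),
    overlapIntegral_of_odd hL (by omega) hs (by omega)
      (by rw [neg_mul]; exact (hr_odd.mul hs_odd).neg), hcos]
  have hr0 : (r : ℂ) ≠ 0 := by exact_mod_cast (by omega : r ≠ 0)
  have hs0 : (s : ℂ) ≠ 0 := by exact_mod_cast (by omega : s ≠ 0)
  push_cast [ofReal_zpow]
  rw [zpow_add₀ two_ne_zero, two_mul j, zpow_add₀ two_ne_zero]
  field_simp
  ring_nf
  simp [I_sq]

lemma norm_innerNj_le {j r s : ℤ} (hj : j < 0) (hr : |r| ≤ 2 ^ (-j).toNat)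
    (hs : |s| ≤ 2 ^ (-j).toNat) (hrs : ¬(r = 0 ∧ s = 0)) :
    ‖innerNj j r s‖ ≤ 2 ^ (2 * j + 1) / π := by
  by_cases h : Even (r * s)
  · rw [innerNj_eq_zero_of_even_mul hj hr hs hrs h, norm_zero]
    positivity
  obtain ⟨hr_odd, hs_odd⟩ := Int.odd_mul.1 (Int.not_even_iff_odd.1 h)
  have hr0 : r ≠ 0 := by rintro rfl; simp at hr_odd
  have hs0 : s ≠ 0 := by rintro rfl; simp at hs_odd
  calc ‖innerNj j r s‖
      = (2 ^ j) ^ 2 * (‖overlapIntegral ((2 ^ (-j).toNat : ℤ) : ℝ) r s‖ *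
          ‖overlapIntegral ((2 ^ (-j).toNat : ℤ) : ℝ) s (-r : ℤ)‖) := by
        rw [innerNj_eq_mul_of_nonpos hj.le, norm_mul, norm_mul, norm_pow, norm_zpow,
          RCLike.norm_ofNat]
    _ ≤ (2 ^ j) ^ 2 * (2 / π * (2 / π)) := by
        gcongr
        exacts [norm_overlapIntegral_le hr hs0, norm_overlapIntegral_le hs (neg_ne_zero.2 hr0)]
    _ ≤ (2 ^ j) ^ 2 * (1 * (2 / π)) := by
        gcongr
        exact (div_le_one Real.pi_pos).2 Real.two_le_pi
    _ = 2 ^ (2 * j + 1) / π := by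
        rw [zpow_add₀ two_ne_zero, two_mul j, zpow_add₀ two_ne_zero, zpow_one]
        ring

theorem Nj_inner_products (j r s : ℤ) (hj : j < 0)
    (hr : |r| ≤ 2 ^ (-j).toNat - 1) (hs : |s| ≤ 2 ^ (-j).toNat - 1)
    (hrs : ¬(r = 0 ∧ s = 0)) :
    ((r = 0 ∨ s = 0 ∨ Even r ∨ Even s) → innerNj j r s = 0) ∧
    (1 ≤ r → 1 ≤ s → Odd r → Odd s →
      innerNj j r s =
        ((((2 : ℝ) ^ (2 * j + 1) / (Real.pi ^ 2 * r * s)) *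
          (1 - Real.cos (Real.pi * r * s)) : ℝ) : ℂ)) ∧
    ‖innerNj j r s‖ ≤ (2 : ℝ) ^ (2 * j + 1) / Real.pi := by
  have hr' : |r| ≤ 2 ^ (-j).toNat := by omega
  have hs' : |s| ≤ 2 ^ (-j).toNat := by omega
  refine ⟨fun h ↦ innerNj_eq_zero_of_even_mul hj hr' hs' hrs ?_,
    innerNj_of_odd hj (le_of_abs_le hr') (le_of_abs_le hs'), norm_innerNj_le hj hr' hs' hrs⟩
  rcases h with rfl | rfl | h | h
  exacts [by simp, by simp, h.mul_right s, h.mul_left r]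
end

section
/- For each fixed j ∈ ℤ with j < 0, the system {T^t_{(k,l)} N_j : k, l ∈ ℤ} with N_j(x,y) := 2^j φ₁(2^j x, 2^j y) is a Riesz sequence in L²(ℝ²) with bounds 1 − 2/π and 1 + 2/π: (1 − 2/π)‖c‖² ≤ ‖Σ_{k,l} c_{k,l} T^t_{(k,l)} N_j‖² ≤ (1 + 2/π)‖c‖² for all finite c ∈ ℓ²(ℤ²). For j ≥ 0 the system is orthonormal. -/
open MeasureTheory

/-
Put `δ = 2⁻ʲ`. Then `T_{(k,l)} N_j` is `δ⁻¹ e^{πi(lx - ky)}` on the square `[k, k+δ) × [l, l+δ)`,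
so each Gram entry `⟨T_p N_j, T_q N_j⟩` is `δ⁻²` times a product of two integrals of `e^{πimx}` over
the overlap of two intervals of length `δ`. For `δ ≤ 1` distinct squares are disjoint, which gives
orthonormality. For `j < 0`, `δ = M` is an even integer; an off-diagonal entry then vanishes unless
both coordinates of `p - q` are odd and of absolute value below `M` (otherwise one of the factors
integrates `e^{πimx}` over a whole number of periods), and each surviving entry is at most
`(2/(πM))²`. So every row of the off-diagonal Gram matrix has at most `M²` nonzero entries and sum
at most `4/π² ≤ 2/π`, and Schur's test bounds the off-diagonal part of the Gram form by that
constant.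
-/

open Set Complex Real
open scoped ComplexConjugate

section GramEstimates

variable {𝕜 ι : Type*} [RCLike 𝕜]

theorem norm_sum_sum_mul_conj_le_of_schur (s : Finset ι) (c : ι → 𝕜) (K : ι → ι → 𝕜) (B : ℝ)
    (hrow : ∀ p ∈ s, ∑ q ∈ s, ‖K p q‖ ≤ B) (hcol : ∀ q ∈ s, ∑ p ∈ s, ‖K p q‖ ≤ B) :
    ‖∑ p ∈ s, ∑ q ∈ s, c p * conj (c q) * K p q‖ ≤ B * ∑ p ∈ s, ‖c p‖ ^ 2 := by
  calc ‖∑ p ∈ s, ∑ q ∈ s, c p * conj (c q) * K p q‖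
      ≤ ∑ p ∈ s, ∑ q ∈ s, ‖c p‖ * ‖c q‖ * ‖K p q‖ := by
        refine (norm_sum_le _ _).trans (Finset.sum_le_sum fun p _ => ?_)
        refine (norm_sum_le _ _).trans_eq (Finset.sum_congr rfl fun q _ => ?_)
        rw [norm_mul, norm_mul, RCLike.norm_conj]
    _ ≤ ∑ p ∈ s, ∑ q ∈ s, (‖c p‖ ^ 2 / 2 * ‖K p q‖ + ‖c q‖ ^ 2 / 2 * ‖K p q‖) := by
        gcongr with p _ q _
        nlinarith [sq_nonneg (‖c p‖ - ‖c q‖), norm_nonneg (K p q)]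
    _ = ∑ p ∈ s, ‖c p‖ ^ 2 / 2 * ∑ q ∈ s, ‖K p q‖ +
          ∑ q ∈ s, ‖c q‖ ^ 2 / 2 * ∑ p ∈ s, ‖K p q‖ := by
        simp only [Finset.sum_add_distrib, Finset.mul_sum]
        rw [Finset.sum_comm (f := fun p q => ‖c q‖ ^ 2 / 2 * ‖K p q‖)]
    _ ≤ ∑ p ∈ s, ‖c p‖ ^ 2 / 2 * B + ∑ q ∈ s, ‖c q‖ ^ 2 / 2 * B := by
        gcongr with p hp q hq
        exacts [hrow p hp, hcol q hq]
    _ = B * ∑ p ∈ s, ‖c p‖ ^ 2 := by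
        rw [← Finset.sum_add_distrib, Finset.mul_sum]
        exact Finset.sum_congr rfl fun p _ => by ring

theorem norm_sum_sum_mul_conj_sub_le [DecidableEq ι] (s : Finset ι) (c : ι → 𝕜)
    (G : ι → ι → 𝕜) (B : ℝ) (hdiag : ∀ p ∈ s, G p p = 1)
    (hrow : ∀ p ∈ s, ∑ q ∈ s.erase p, ‖G p q‖ ≤ B)
    (hcol : ∀ q ∈ s, ∑ p ∈ s.erase q, ‖G p q‖ ≤ B) :
    ‖∑ p ∈ s, ∑ q ∈ s, c p * conj (c q) * G p q - ((∑ p ∈ s, ‖c p‖ ^ 2 : ℝ) : 𝕜)‖ ≤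
      B * ∑ p ∈ s, ‖c p‖ ^ 2 := by
  set K : ι → ι → 𝕜 := fun p q => if p = q then 0 else G p q
  have hG : ∀ p ∈ s, ∀ q, G p q = K p q + if p = q then 1 else 0 := by
    intro p hp q
    by_cases h : p = q
    · subst h; simp [K, hdiag p hp]
    · simp [K, h]
  have hK : ∀ p q, q ≠ p → ‖K p q‖ = ‖G p q‖ := fun p q h => by simp [K, Ne.symm h]
  have hdiagonal : ∑ p ∈ s, ∑ q ∈ s, c p * conj (c q) * (if p = q then 1 else 0) =
      ((∑ p ∈ s, ‖c p‖ ^ 2 : ℝ) : 𝕜) := by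
    push_cast
    exact Finset.sum_congr rfl fun p hp => by simp [hp, RCLike.mul_conj]
  have hoff : ∑ p ∈ s, ∑ q ∈ s, c p * conj (c q) * G p q - ((∑ p ∈ s, ‖c p‖ ^ 2 : ℝ) : 𝕜) =
      ∑ p ∈ s, ∑ q ∈ s, c p * conj (c q) * K p q := by
    rw [← hdiagonal, ← Finset.sum_sub_distrib]
    refine Finset.sum_congr rfl fun p hp => ?_
    rw [← Finset.sum_sub_distrib]
    exact Finset.sum_congr rfl fun q _ => by rw [hG p hp q]; ring
  rw [hoff]
  refine norm_sum_sum_mul_conj_le_of_schur s c K B (fun p hp => ?_) (fun q hq => ?_)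
  · rw [← Finset.sum_erase s (f := fun q => ‖K p q‖) (a := p) (by simp [K]),
      Finset.sum_congr rfl fun q hq => hK p q (Finset.ne_of_mem_erase hq)]
    exact hrow p hp
  · rw [← Finset.sum_erase s (f := fun p => ‖K p q‖) (a := q) (by simp [K]),
      Finset.sum_congr rfl fun p hp => hK p q (Finset.ne_of_mem_erase hp).symm]
    exact hcol q hq

theorem integral_norm_sum_mul_sq {α : Type*} [MeasurableSpace α] (μ : Measure α)
    (s : Finset ι) (c : ι → 𝕜) (f : ι → α → 𝕜)
    (hf : ∀ p ∈ s, ∀ q ∈ s, Integrable (fun z => f p z * conj (f q z)) μ) :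
    ∫ z, ‖∑ p ∈ s, c p * f p z‖ ^ 2 ∂μ =
      RCLike.re (∑ p ∈ s, ∑ q ∈ s, c p * conj (c q) * ∫ z, f p z * conj (f q z) ∂μ) := by
  have hpoint : ∀ z, ‖∑ p ∈ s, c p * f p z‖ ^ 2 =
      RCLike.re (∑ p ∈ s, ∑ q ∈ s, c p * conj (c q) * (f p z * conj (f q z))) := by
    intro z
    have h := RCLike.mul_conj (∑ p ∈ s, c p * f p z)
    rw [map_sum, Finset.sum_mul_sum] at h
    rw [← RCLike.ofReal_re (K := 𝕜) (‖_‖ ^ 2), RCLike.ofReal_pow, ← h]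
    congr 1
    exact Finset.sum_congr rfl fun p _ => Finset.sum_congr rfl fun q _ => by rw [map_mul]; ring
  have hint : ∀ p ∈ s, ∀ q ∈ s,
      Integrable (fun z => c p * conj (c q) * (f p z * conj (f q z))) μ :=
    fun p hp q hq => (hf p hp q hq).const_mul _
  simp_rw [hpoint]
  rw [integral_re (integrable_finsetSum _ fun p hp => integrable_finsetSum _ (hint p hp)),
    integral_finsetSum _ fun p hp => integrable_finsetSum _ (hint p hp)]
  congr 1
  refine Finset.sum_congr rfl fun p hp => ?_
  rw [integral_finsetSum _ (hint p hp)]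
  exact Finset.sum_congr rfl fun q _ => integral_const_mul _ _

end GramEstimates

theorem setIntegral_Ico_eq_intervalIntegral {E : Type*} [NormedAddCommGroup E]
    [NormedSpace ℝ E] {f : ℝ → E} {a b : ℝ} (h : a ≤ b) :
    ∫ x in Ico a b, f x = ∫ x in a..b, f x := by
  rw [integral_Ico_eq_integral_Ioo, ← integral_Ioc_eq_integral_Ioo,
    intervalIntegral.integral_of_le h]

theorem integral_exp_pi_mul_I {m : ℤ} (hm : m ≠ 0) (a b : ℝ) :
    ∫ x in a..b, cexp (π * I * m * x) =
      (cexp (π * I * m * b) - cexp (π * I * m * a)) / (π * I * m) :=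
  integral_exp_mul_complex (by simp [hm, Real.pi_ne_zero])

theorem norm_integral_exp_pi_mul_I_le {m : ℤ} (hm : m ≠ 0) (a b : ℝ) :
    ‖∫ x in a..b, cexp (π * I * m * x)‖ ≤ 2 / π := by
  have hunit : ∀ x : ℝ, ‖cexp (π * I * m * x)‖ = 1 := fun x => by
    rw [show (π : ℂ) * I * m * x = ((π * m * x : ℝ) : ℂ) * I by push_cast; ring]
    exact norm_exp_ofReal_mul_I _
  have hm1 : (1 : ℝ) ≤ |(m : ℝ)| := by exact_mod_cast Int.one_le_abs hm
  have hden : ‖(π : ℂ) * I * m‖ = π * |(m : ℝ)| := by simp [abs_of_pos pi_pos]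
  rw [integral_exp_pi_mul_I hm, norm_div, hden, div_le_div_iff₀ (by positivity) pi_pos]
  calc ‖cexp (π * I * m * b) - cexp (π * I * m * a)‖ * π ≤ 2 * π := by
        gcongr
        exact (norm_sub_le _ _).trans (by rw [hunit, hunit]; norm_num)
    _ ≤ 2 * (π * |(m : ℝ)|) := by nlinarith [pi_pos]

theorem integral_exp_pi_mul_I_add_eq_zero {m L : ℤ} (hm : m ≠ 0) (hmL : Even (m * L)) (a : ℝ) :
    ∫ x in a..a + L, cexp (π * I * m * x) = 0 := by
  obtain ⟨t, ht⟩ := hmL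
  have ht' : (m : ℂ) * L = t + t := by exact_mod_cast ht
  rw [integral_exp_pi_mul_I hm, div_eq_zero_iff, sub_eq_zero]
  left
  rw [show (π : ℂ) * I * m * ↑(a + L) = π * I * m * a + t * (2 * π * I) by
      push_cast; linear_combination π * I * ht',
    Complex.exp_add, exp_int_mul_two_pi_mul_I, mul_one]

noncomputable def boxAtom (δ : ℝ) : ℝ × ℝ → ℂ :=
  (Ico 0 δ ×ˢ Ico 0 δ).indicator fun _ => ((δ⁻¹ : ℝ) : ℂ)

theorem Nj_eq_boxAtom (j : ℤ) : Nj j = boxAtom (2 ^ (-j)) := by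
  have h2 : (0 : ℝ) < 2 ^ j := by positivity
  have hmem : ∀ x : ℝ, 2 ^ j * x ∈ Ico (0 : ℝ) 1 ↔ x ∈ Ico 0 (2 ^ (-j)) := by
    intro x
    rw [zpow_neg, mem_Ico, mem_Ico, mul_nonneg_iff_of_pos_left h2, ← lt_div_iff₀' h2, one_div]
  ext z
  simp only [Nj, phi1, boxAtom, indicator_apply, mem_prod, hmem, zpow_neg, inv_inv]
  push_cast
  rw [mul_ite, mul_one, mul_zero]

noncomputable def overlapWave (δ : ℝ) (m u v : ℤ) : ℝ → ℂ :=
  (Ico (u : ℝ) (u + δ) ∩ Ico (v : ℝ) (v + δ)).indicator fun x => cexp (π * I * m * x)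

theorem tT_boxAtom_mul_conj (δ : ℝ) (p q : ℤ × ℤ) (z : ℝ × ℝ) :
    tT p.1 p.2 (boxAtom δ) z * conj (tT q.1 q.2 (boxAtom δ) z) =
      ((δ⁻¹ ^ 2 : ℝ) : ℂ) *
        (overlapWave δ (p.2 - q.2) p.1 q.1 z.1 * overlapWave δ (q.1 - p.1) p.2 q.2 z.2) := by
  obtain ⟨x, y⟩ := z
  have hphase :
      cexp (π * I * (p.2 * x - p.1 * y)) * conj (cexp (π * I * (q.2 * x - q.1 * y))) =
        cexp (π * I * (p.2 - q.2 : ℤ) * x) * cexp (π * I * (q.1 - p.1 : ℤ) * y) := by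
    rw [← Complex.exp_conj, ← Complex.exp_add, ← Complex.exp_add]
    congr 1
    simp only [map_mul, map_sub, conj_I, conj_ofReal, map_intCast]
    push_cast
    ring
  simp only [tT, boxAtom, overlapWave, indicator_apply, mem_prod, mem_inter_iff, mem_Ico,
    sub_nonneg, sub_lt_iff_lt_add']
  by_cases hx₁ : (p.1 : ℝ) ≤ x ∧ x < p.1 + δ <;>
    by_cases hx₂ : (q.1 : ℝ) ≤ x ∧ x < q.1 + δ <;>
    by_cases hy₁ : (p.2 : ℝ) ≤ y ∧ y < p.2 + δ <;>
    by_cases hy₂ : (q.2 : ℝ) ≤ y ∧ y < q.2 + δ <;>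
    simp only [hx₁, hx₂, hy₁, hy₂, and_self, and_true, and_false, if_true, if_false,
      mul_zero, zero_mul, map_zero]
  rw [← hphase, map_mul, ofReal_pow, ofReal_inv, map_inv₀, conj_ofReal]
  ring

theorem integral_overlapWave (δ : ℝ) (m u v : ℤ) :
    ∫ x, overlapWave δ m u v x =
      ∫ x in Ico (max (u : ℝ) v) (min (u : ℝ) v + δ), cexp (π * I * m * x) := by
  rw [overlapWave, integral_indicator (measurableSet_Ico.inter measurableSet_Ico),
    Ico_inter_Ico, min_add_add_right]

theorem integral_overlapWave_zero_self {δ : ℝ} (hδ : 0 ≤ δ) (u : ℤ) :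
    ∫ x, overlapWave δ 0 u u x = δ := by
  simp [integral_overlapWave, hδ]

theorem integral_overlapWave_eq_zero_of_le_abs {δ : ℝ} {u v : ℤ} (h : δ ≤ |(u : ℝ) - v|)
    (m : ℤ) : ∫ x, overlapWave δ m u v x = 0 := by
  have hlen := max_sub_min_eq_abs' (u : ℝ) v
  rw [integral_overlapWave, Ico_eq_empty (by linarith), Measure.restrict_empty,
    integral_zero_measure]

theorem norm_integral_overlapWave_le (δ : ℝ) {m : ℤ} (hm : m ≠ 0) (u v : ℤ) :
    ‖∫ x, overlapWave δ m u v x‖ ≤ 2 / π := by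
  rw [integral_overlapWave]
  rcases le_or_gt (max (u : ℝ) v) (min (u : ℝ) v + δ) with h | h
  · rw [setIntegral_Ico_eq_intervalIntegral h]
    exact norm_integral_exp_pi_mul_I_le hm _ _
  · rw [Ico_eq_empty (not_lt.mpr h.le), Measure.restrict_empty, integral_zero_measure,
      norm_zero]
    positivity

theorem integral_overlapWave_eq_zero {M : ℕ} (hM : Even M) {m : ℤ} (hm : m ≠ 0) {u v : ℤ}
    (hmuv : Even (m * (u - v))) : ∫ x, overlapWave M m u v x = 0 := by
  rcases le_or_gt (M : ℝ) |(u : ℝ) - v| with h | h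
  · exact integral_overlapWave_eq_zero_of_le_abs h m
  have hlen : min (u : ℝ) v + M = max (u : ℝ) v + ((M - |u - v| : ℤ) : ℝ) := by
    push_cast; linarith [max_sub_min_eq_abs' (u : ℝ) v]
  have hpar : Even (m * (M - |u - v|)) := by
    rcases Int.even_mul.mp hmuv with hm2 | huv
    · exact hm2.mul_right _
    · exact (((Int.even_coe_nat M).mpr hM).sub (even_abs.mpr huv)).mul_left _
  rw [integral_overlapWave, hlen, setIntegral_Ico_eq_intervalIntegral (le_add_of_nonneg_right
    (by push_cast; linarith)), integral_exp_pi_mul_I_add_eq_zero hm hpar]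

theorem integrable_overlapWave (δ : ℝ) (m u v : ℤ) : Integrable (overlapWave δ m u v) :=
  (integrable_indicator_iff (measurableSet_Ico.inter measurableSet_Ico)).mpr <|
    (Continuous.integrableOn_Icc (by fun_prop)).mono_set
      (inter_subset_left.trans Ico_subset_Icc_self)

noncomputable def boxGram (δ : ℝ) (p q : ℤ × ℤ) : ℂ :=
  ∫ z, tT p.1 p.2 (boxAtom δ) z * conj (tT q.1 q.2 (boxAtom δ) z)

theorem integrable_tT_boxAtom_mul_conj (δ : ℝ) (p q : ℤ × ℤ) :
    Integrable fun z => tT p.1 p.2 (boxAtom δ) z * conj (tT q.1 q.2 (boxAtom δ) z) := by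
  simp_rw [tT_boxAtom_mul_conj, Measure.volume_eq_prod]
  exact ((integrable_overlapWave ..).mul_prod (integrable_overlapWave ..)).const_mul _

theorem boxGram_eq (δ : ℝ) (p q : ℤ × ℤ) :
    boxGram δ p q = ((δ⁻¹ ^ 2 : ℝ) : ℂ) *
      ((∫ x, overlapWave δ (p.2 - q.2) p.1 q.1 x) *
        ∫ y, overlapWave δ (q.1 - p.1) p.2 q.2 y) := by
  simp_rw [boxGram, tT_boxAtom_mul_conj, integral_const_mul, Measure.volume_eq_prod,
    integral_prod_mul]

theorem boxGram_self {δ : ℝ} (hδ : 0 < δ) (p : ℤ × ℤ) : boxGram δ p p = 1 := by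
  rw [boxGram_eq, sub_self, sub_self, integral_overlapWave_zero_self hδ.le,
    integral_overlapWave_zero_self hδ.le]
  have hδ' : (δ : ℂ) ≠ 0 := by exact_mod_cast hδ.ne'
  push_cast
  field_simp

theorem boxGram_swap (δ : ℝ) (p q : ℤ × ℤ) : boxGram δ q p = conj (boxGram δ p q) := by
  rw [boxGram, boxGram, ← integral_conj]
  simp_rw [map_mul, Complex.conj_conj, mul_comm]

theorem boxGram_eq_ite {δ : ℝ} (hδ₀ : 0 < δ) (hδ₁ : δ ≤ 1) (p q : ℤ × ℤ) :
    boxGram δ p q = if p = q then 1 else 0 := by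
  split_ifs with hpq
  · rw [hpq, boxGram_self hδ₀]
  have hsep : ∀ u v : ℤ, u ≠ v → δ ≤ |(u : ℝ) - v| := fun u v h =>
    hδ₁.trans (by exact_mod_cast Int.one_le_abs (sub_ne_zero.mpr h))
  rw [boxGram_eq]
  by_cases h₁ : p.1 = q.1
  · rw [integral_overlapWave_eq_zero_of_le_abs (hsep _ _ fun h₂ => hpq (Prod.ext h₁ h₂)),
      mul_zero, mul_zero]
  · rw [integral_overlapWave_eq_zero_of_le_abs (hsep _ _ h₁), zero_mul, mul_zero]

theorem norm_boxGram_le (δ : ℝ) {p q : ℤ × ℤ} (h₁ : p.1 ≠ q.1) (h₂ : p.2 ≠ q.2) :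
    ‖boxGram δ p q‖ ≤ (δ⁻¹ * (2 / π)) ^ 2 := by
  rw [boxGram_eq, norm_mul, norm_mul, norm_real, Real.norm_eq_abs,
    abs_of_nonneg (by positivity), mul_pow]
  gcongr
  rw [sq]
  exact mul_le_mul (norm_integral_overlapWave_le δ (sub_ne_zero.mpr h₂) _ _)
    (norm_integral_overlapWave_le δ (sub_ne_zero.mpr h₁.symm) _ _) (norm_nonneg _)
    (by positivity)

theorem boxGram_ne_zero {M : ℕ} (hM : Even M) {p q : ℤ × ℤ} (hpq : p ≠ q)
    (h : boxGram M p q ≠ 0) :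
    Odd (p.1 - q.1) ∧ Odd (p.2 - q.2) ∧ |p.1 - q.1| < M ∧ |p.2 - q.2| < M := by
  have h₁ : ∫ x, overlapWave M (p.2 - q.2) p.1 q.1 x ≠ 0 := fun h0 => h (by
    rw [boxGram_eq, h0, zero_mul, mul_zero])
  have h₂ : ∫ y, overlapWave M (q.1 - p.1) p.2 q.2 y ≠ 0 := fun h0 => h (by
    rw [boxGram_eq, h0, mul_zero, mul_zero])
  have hclose : ∀ {m u v : ℤ}, ∫ x, overlapWave M m u v x ≠ 0 → |u - v| < M := by
    intro m u v huv
    by_contra! hle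
    exact huv (integral_overlapWave_eq_zero_of_le_abs (by exact_mod_cast hle) m)
  have hb : p.2 - q.2 ≠ 0 := by
    intro hb
    have ha : q.1 - p.1 ≠ 0 := fun ha =>
      hpq (Prod.ext (sub_eq_zero.mp ha).symm (sub_eq_zero.mp hb))
    exact h₂ (integral_overlapWave_eq_zero hM ha (by rw [hb, mul_zero]; exact Even.zero))
  obtain ⟨hb_odd, ha_odd⟩ := Int.odd_mul.mp
    (Int.not_even_iff_odd.mp fun he => h₁ (integral_overlapWave_eq_zero hM hb he))
  exact ⟨ha_odd, hb_odd, hclose h₁, hclose h₂⟩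

theorem card_filter_odd_offsets_le (M : ℕ) (s : Finset (ℤ × ℤ)) (p : ℤ × ℤ) :
    (s.filter fun q =>
      Odd (p.1 - q.1) ∧ Odd (p.2 - q.2) ∧ |p.1 - q.1| < M ∧ |p.2 - q.2| < M).card ≤ M ^ 2 := by
  -- odd offsets in `(-M, M)` are `2` apart, so halving `offset + M` separates them
  let index : ℤ × ℤ → ℕ × ℕ := fun q =>
    (((q.1 - p.1 + M) / 2).toNat, ((q.2 - p.2 + M) / 2).toNat)
  calc _ ≤ (Finset.range M ×ˢ Finset.range M).card := by
        refine Finset.card_le_card_of_injOn index (fun q hq => ?_) (fun q hq q' hq' h => ?_)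
        · simp only [Finset.coe_filter, mem_ofPred_eq, Int.odd_iff, abs_lt] at hq
          simp only [Finset.coe_product, Finset.coe_range, mem_prod, mem_Iio, index]
          omega
        · simp only [Finset.coe_filter, mem_ofPred_eq, Int.odd_iff, abs_lt] at hq hq'
          simp only [Prod.ext_iff, index] at h ⊢
          omega
    _ = M ^ 2 := by simp [sq]

theorem sum_norm_boxGram_le {M : ℕ} (hM : Even M) (hM₀ : 0 < M) (s : Finset (ℤ × ℤ))
    (p : ℤ × ℤ) : ∑ q ∈ s.erase p, ‖boxGram M p q‖ ≤ 4 / π ^ 2 := by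
  set t := (s.erase p).filter fun q =>
    Odd (p.1 - q.1) ∧ Odd (p.2 - q.2) ∧ |p.1 - q.1| < M ∧ |p.2 - q.2| < M
  have hne : ∀ {a b : ℤ}, Odd (a - b) → a ≠ b := fun hab h => by simp [h] at hab
  calc ∑ q ∈ s.erase p, ‖boxGram M p q‖ = ∑ q ∈ t, ‖boxGram M p q‖ :=
        (Finset.sum_filter_of_ne fun q hq h0 =>
          boxGram_ne_zero hM (Finset.ne_of_mem_erase hq).symm (norm_ne_zero_iff.mp h0)).symm
    _ ≤ ∑ q ∈ t, ((M : ℝ)⁻¹ * (2 / π)) ^ 2 := Finset.sum_le_sum fun q hq => by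
        obtain ⟨-, h₁, h₂, -⟩ := (Finset.mem_filter.mp hq)
        exact norm_boxGram_le _ (hne h₁) (hne h₂)
    _ = t.card * ((M : ℝ)⁻¹ * (2 / π)) ^ 2 := by rw [Finset.sum_const, nsmul_eq_mul]
    _ ≤ (M ^ 2 : ℕ) * ((M : ℝ)⁻¹ * (2 / π)) ^ 2 := by
        gcongr
        exact card_filter_odd_offsets_le M _ p
    _ = 4 / π ^ 2 := by
        have : (M : ℝ) ≠ 0 := by exact_mod_cast hM₀.ne'
        push_cast
        field_simp
        ring

theorem abs_integral_norm_sum_tT_boxAtom_sub_le {M : ℕ} (hM : Even M) (hM₀ : 0 < M)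
    (s : Finset (ℤ × ℤ)) (c : ℤ × ℤ → ℂ) :
    |(∫ z, ‖∑ p ∈ s, c p * tT p.1 p.2 (boxAtom M) z‖ ^ 2) - ∑ p ∈ s, ‖c p‖ ^ 2| ≤
      4 / π ^ 2 * ∑ p ∈ s, ‖c p‖ ^ 2 := by
  have hgram := norm_sum_sum_mul_conj_sub_le s c (boxGram M) (4 / π ^ 2)
    (fun p _ => boxGram_self (by exact_mod_cast hM₀) p)
    (fun p _ => sum_norm_boxGram_le hM hM₀ s p)
    (fun q _ => by
      simp_rw [← norm_conj (boxGram M _ q), ← boxGram_swap]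
      exact sum_norm_boxGram_le hM hM₀ s q)
  have hexpand := integral_norm_sum_mul_sq volume s c (fun p => tT p.1 p.2 (boxAtom M))
    fun p _ q _ => integrable_tT_boxAtom_mul_conj M p q
  rw [hexpand, ← RCLike.ofReal_re (K := ℂ) (∑ p ∈ s, ‖c p‖ ^ 2), ← map_sub]
  exact (RCLike.abs_re_le_norm _).trans hgram

theorem Nj_riesz (j : ℤ) :
    (j < 0 → ∀ (s : Finset (ℤ × ℤ)) (c : ℤ × ℤ → ℂ),
      (1 - 2 / Real.pi) * ∑ p ∈ s, ‖c p‖ ^ 2 ≤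
          (∫ z : ℝ × ℝ, ‖∑ p ∈ s, c p * tT p.1 p.2 (Nj j) z‖ ^ 2) ∧
      (∫ z : ℝ × ℝ, ‖∑ p ∈ s, c p * tT p.1 p.2 (Nj j) z‖ ^ 2) ≤
        (1 + 2 / Real.pi) * ∑ p ∈ s, ‖c p‖ ^ 2) ∧
    (0 ≤ j → ∀ k l k' l' : ℤ,
      (∫ p : ℝ × ℝ, tT k l (Nj j) p * (starRingEnd ℂ) (tT k' l' (Nj j) p)) =
        if k = k' ∧ l = l' then 1 else 0) := by
  refine ⟨fun hj s c => ?_, fun hj k l k' l' => ?_⟩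
  · obtain ⟨n, hn⟩ : ∃ n : ℕ, -j = n + 1 := ⟨(-j - 1).toNat, by omega⟩
    have hside : (2 : ℝ) ^ (-j) = ((2 ^ (n + 1) : ℕ) : ℝ) := by
      rw [hn, ← Nat.cast_succ, zpow_natCast]
      push_cast
      rfl
    have hbound := abs_integral_norm_sum_tT_boxAtom_sub_le
      (Nat.even_pow.mpr ⟨even_two, n.succ_ne_zero⟩) (by positivity) s c
    rw [← hside, ← Nj_eq_boxAtom] at hbound
    have hπ : 4 / π ^ 2 ≤ 2 / π := by
      rw [div_le_div_iff₀ (by positivity) pi_pos]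
      nlinarith [pi_gt_three]
    have hS : 0 ≤ ∑ p ∈ s, ‖c p‖ ^ 2 := by positivity
    have hπS := mul_le_mul_of_nonneg_right hπ hS
    constructor <;> linarith [abs_le.mp hbound]
  · have h := boxGram_eq_ite (δ := 2 ^ (-j)) (by positivity)
      (zpow_le_one_of_nonpos₀ one_le_two (by omega)) (k, l) (k', l')
    rw [boxGram, ← Nj_eq_boxAtom] at h
    simpa only [Prod.mk.injEq] using h
end
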